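/- arXiv:1710.08755 — 3 statements merged into one kernel-verified Lean document; each statement's English description precedes it below -/
import Mathlib

section
/- A subset α ⊆ ℕ* satisfying (i) α is inhabited and (ii) any two elements of α are comparable under the initial-segment order, is a formal point of formal Baire space (i.e., additionally downward closed under initial segments and every element has a one-step extension in α) if and only if for every a ∈ ℕ* and U ⊆ ℕ*, a ◁ U and a ∈ α imply there exists b ∈ U with b ∈ α, where ◁ is the inductively defined cover of formal Baire space. -/
/-!
A point with the two closure properties meets every
cover of its members, by induction on `◁`: `ζ` is answered by downward closure and `ϝ` by the
existence of a one-step extension. Conversely, splitting the covers `a ++ c ◁ {a}` and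
`a ◁ {a ++ [n] | n}` gives back exactly those two properties.
-/

/-- Initial segment of `α` of length `n`. -/
def seg (α : ℕ → ℕ) (n : ℕ) : List ℕ := List.ofFn (fun i : Fin n => α i)

/-- `a` followed by the constant zero sequence. -/
def zext (a : List ℕ) : ℕ → ℕ := fun i => a.getD i 0

/-- Upward closure under extension. -/
def extU (U : Set (List ℕ)) : Set (List ℕ) := {a | ∃ b ∈ U, b <+: a}

/-- The cover of formal Baire space, generated by η, ζ, ϝ. -/
inductive Cover : List ℕ → Set (List ℕ) → Prop
  | eta {a : List ℕ} {U : Set (List ℕ)} : a ∈ U → Cover a U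
  | zeta {a : List ℕ} {U : Set (List ℕ)} (k : ℕ) : Cover a U → Cover (a ++ [k]) U
  | digamma {a : List ℕ} {U : Set (List ℕ)} : (∀ n, Cover (a ++ [n]) U) → Cover a U

/-- A spread: a decidable tree where every node has a child. -/
def IsSpread (T : Set (List ℕ)) : Prop :=
  (∀ a, a ∈ T ∨ a ∉ T) ∧ (∀ a b : List ℕ, a <+: b → b ∈ T → a ∈ T) ∧
  (∀ a ∈ T, ∃ n, a ++ [n] ∈ T)

/-- A fan: a finitely branching spread. -/
def IsFan (T : Set (List ℕ)) : Prop :=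
  IsSpread T ∧ ∀ a ∈ T, ∃ N, ∀ n, a ++ [n] ∈ T → n ≤ N

/-- `α` is a path in the tree `T`. -/
def IsPath (T : Set (List ℕ)) (α : ℕ → ℕ) : Prop := ∀ n, seg α n ∈ T

/-- A c-bar: a c-set barring every sequence. -/
def IsCBar (P : Set (List ℕ)) : Prop :=
  (∃ δ : List ℕ → ℕ, ∀ a, a ∈ P ↔ ∀ b, δ a = δ (a ++ b)) ∧
  (∀ α : ℕ → ℕ, ∃ n, seg α n ∈ P)

/-- Pointwise continuity for `F : ℕ^ℕ → ℕ`. -/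
def PtwiseCts (F : (ℕ → ℕ) → ℕ) : Prop :=
  ∀ α : ℕ → ℕ, ∃ n, ∀ β : ℕ → ℕ, seg β n = seg α n → F β = F α

/-- An inductive subset of ℕ*. -/
def Inductive (Q : Set (List ℕ)) : Prop := ∀ a, (∀ n, a ++ [n] ∈ Q) → a ∈ Q

/-- Preimage of a subset of ℕ under a relation r ⊆ ℕ* × ℕ. -/
def rInv (r : List ℕ → ℕ → Prop) (D : Set ℕ) : Set (List ℕ) := {a | ∃ n ∈ D, r a n}

/-- Formal topology map from formal Baire space to formal natural numbers. -/
def IsFTopMap (r : List ℕ → ℕ → Prop) : Prop :=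
  Cover [] (rInv r Set.univ) ∧
  ∀ n m : ℕ, ∀ a ∈ extU (rInv r {n}) ∩ extU (rInv r {m}),
    Cover a (rInv r {l | l = n ∧ n = m})

/-- `F` is formally continuous: induced by a formal topology map on points. -/
def FormallyCts (F : (ℕ → ℕ) → ℕ) : Prop :=
  ∃ r : List ℕ → ℕ → Prop, IsFTopMap r ∧
    ∀ α : ℕ → ℕ, {n | ∃ k, r (seg α k) n} = {F α}

/-- The class of Brouwer-operations. -/
inductive IsBrouwerOp : (List ℕ → ℕ) → Prop
  | const (n : ℕ) : IsBrouwerOp (fun _ => n + 1)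
  | sup {γ : List ℕ → ℕ} : γ [] = 0 →
      (∀ n, IsBrouwerOp (fun a => γ (n :: a))) → IsBrouwerOp γ

/-- `bar γ`: minimal sequences on which `γ` is positive. -/
def barOf (γ : List ℕ → ℕ) : Set (List ℕ) :=
  {a | 0 < γ a ∧ ∀ b : List ℕ, b <+: a → b ≠ a → γ b = 0}

/-- The set presentation `Cov` of formal Baire space. -/
inductive Cov : List ℕ → Set (List ℕ) → Prop
  | single (a : List ℕ) : Cov a {a}
  | union {a : List ℕ} {U : ℕ → Set (List ℕ)} :
      (∀ n, Cov (a ++ [n]) (U n)) → Cov a (⋃ n, U n)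

theorem Cover.append {a : List ℕ} {U : Set (List ℕ)} (h : Cover a U) (c : List ℕ) :
    Cover (a ++ c) U := by
  induction c using List.reverseRecOn with
  | nil => rwa [List.append_nil]
  | append_singleton c k ih => simpa only [← List.append_assoc] using Cover.zeta k ih

theorem Cover.of_prefix {a b : List ℕ} (hab : a <+: b) : Cover b {a} := by
  obtain ⟨c, rfl⟩ := hab
  exact (Cover.eta (Set.mem_singleton a)).append c

theorem cover_children (a : List ℕ) : Cover a {b | ∃ n, b = a ++ [n]} :=
  Cover.digamma fun n => Cover.eta ⟨n, rfl⟩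

theorem Cover.exists_mem_inter {α : Set (List ℕ)}
    (hdown : ∀ a b : List ℕ, a <+: b → b ∈ α → a ∈ α) (hext : ∀ a ∈ α, ∃ n, a ++ [n] ∈ α)
    {a : List ℕ} {U : Set (List ℕ)} (hc : Cover a U) (ha : a ∈ α) : ∃ b ∈ U, b ∈ α := by
  induction hc with
  | eta hU => exact ⟨_, hU, ha⟩
  | zeta k _ ih => exact ih (hdown _ _ ⟨[k], rfl⟩ ha)
  | digamma _ ih =>
    obtain ⟨n, hn⟩ := hext _ ha
    exact ih n hn

theorem formal_point_iff_splits_general (α : Set (List ℕ)) :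
    ((∀ a b : List ℕ, a <+: b → b ∈ α → a ∈ α) ∧ (∀ a ∈ α, ∃ n, a ++ [n] ∈ α))
      ↔ (∀ (a : List ℕ) (U : Set (List ℕ)), Cover a U → a ∈ α → ∃ b ∈ U, b ∈ α) := by
  refine ⟨fun ⟨hdown, hext⟩ a U => Cover.exists_mem_inter hdown hext, fun hsplit => ⟨?_, ?_⟩⟩
  · intro a b hab hb
    obtain ⟨_, rfl, ha⟩ := hsplit b {a} (Cover.of_prefix hab) hb
    exact ha
  · intro a ha
    obtain ⟨_, ⟨n, rfl⟩, hn⟩ := hsplit a _ (cover_children a) ha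
    exact ⟨n, hn⟩

theorem formal_point_iff_splits (α : Set (List ℕ))
    (h1 : ∃ a, a ∈ α)
    (h2 : ∀ a ∈ α, ∀ b ∈ α, a <+: b ∨ b <+: a) :
    ((∀ a b : List ℕ, a <+: b → b ∈ α → a ∈ α) ∧ (∀ a ∈ α, ∃ n, a ++ [n] ∈ α))
      ↔ (∀ (a : List ℕ) (U : Set (List ℕ)), Cover a U → a ∈ α → ∃ b ∈ U, b ∈ α) :=
  formal_point_iff_splits_general α
end

section
/- Assume sc-FAN: for every c-bar P ⊆ ℕ* and every fan T, there exists N such that P(ᾱN) for every path α in T (where ᾱN is the initial segment of α of length N). Then every pointwise continuous function F : ℕ^ℕ → ℕ is strongly continuous, i.e., for each fan T there exists N such that for all paths α in T and all β ∈ ℕ^ℕ agreeing with α on the first N values, F(α) = F(β). -/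
def IsCSet (P : Set (List ℕ)) : Prop :=
  ∃ δ : List ℕ → ℕ, ∀ a, a ∈ P ↔ ∀ b, δ a = δ (a ++ b)

/-- Witness `δ a := if a ∈ P then 0 else a.length + 1`: off `P`, `δ` already changes at
`a ++ [0]`. -/
theorem isCSet_of_append_mem {P : Set (List ℕ)} (hP : ∀ a b, a ∈ P → a ++ b ∈ P) :
    IsCSet P := by
  classical
  refine ⟨fun a => if a ∈ P then 0 else a.length + 1, fun a => ⟨fun ha b => ?_, fun h => ?_⟩⟩
  · simp only [ha, hP a b ha, if_true]
  · by_contra ha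
    have hδ := h [0]
    dsimp only at hδ
    split_ifs at hδ
    simp at hδ

@[simp]
theorem seg_length (α : ℕ → ℕ) (n : ℕ) : (seg α n).length = n := by
  simp [seg]

theorem seg_take (α : ℕ → ℕ) {m n : ℕ} (h : m ≤ n) : (seg α n).take m = seg α m := by
  apply List.ext_getElem
  · simp [h]
  · intro i _ _
    simp [seg]

theorem seg_eq_of_seg_eq_append {β : ℕ → ℕ} {a b : List ℕ}
    (h : seg β (a ++ b).length = a ++ b) : seg β a.length = a := by
  rw [← seg_take β (n := (a ++ b).length) (by simp), h, List.take_left]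

def constNodes (F : (ℕ → ℕ) → ℕ) : Set (List ℕ) :=
  {a | ∀ β γ : ℕ → ℕ, seg β a.length = a → seg γ a.length = a → F β = F γ}

theorem append_mem_constNodes {F : (ℕ → ℕ) → ℕ} {a : List ℕ} (b : List ℕ)
    (ha : a ∈ constNodes F) : a ++ b ∈ constNodes F :=
  fun β γ hβ hγ => ha β γ (seg_eq_of_seg_eq_append hβ) (seg_eq_of_seg_eq_append hγ)

theorem isCBar_constNodes {F : (ℕ → ℕ) → ℕ} (hF : PtwiseCts F) : IsCBar (constNodes F) := by
  refine ⟨isCSet_of_append_mem fun _ b ha => append_mem_constNodes b ha, fun α => ?_⟩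
  obtain ⟨n, hn⟩ := hF α
  refine ⟨n, fun β γ hβ hγ => ?_⟩
  rw [seg_length] at hβ hγ
  rw [hn β hβ, hn γ hγ]

theorem scFAN_implies_SC
    (hscFAN : ∀ P : Set (List ℕ), IsCBar P → ∀ T : Set (List ℕ), IsFan T →
      ∃ N, ∀ α : ℕ → ℕ, IsPath T α → seg α N ∈ P)
    (F : (ℕ → ℕ) → ℕ) (hF : PtwiseCts F) :
    ∀ T : Set (List ℕ), IsFan T → ∃ N, ∀ α : ℕ → ℕ, IsPath T α →
      ∀ β : ℕ → ℕ, seg α N = seg β N → F α = F β := by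
  intro T hT
  obtain ⟨N, hN⟩ := hscFAN (constNodes F) (isCBar_constNodes hF) T hT
  refine ⟨N, fun α hα β hβ => hN α hα α β ?_ ?_⟩ <;> simp [hβ]
end

section
/- c-BI implies FC: if for every c-bar P and every inductive Q ⊇ P one has Q(⟨⟩), then every pointwise continuous function F : ℕ^ℕ → ℕ is formally continuous. Specifically, given pointwise continuous F, the set P(a) ⟺ (∀ b ∈ ℕ*, F(a⌢0^ω) = F(a⌢b⌢0^ω)) is a c-bar, and the relation a r n ⟺ P(a) ∧ F(a⌢0^ω) = n is a formal topology map inducing F. -/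
/-!
A modulus of pointwise continuity of `F` at `α` makes the node `ᾱm` stable: `F` takes the value
`F α` on every zero-extension of every extension of it. So the stable nodes form a c-bar, with
`δ a = F(a⌢0^ω)` as witness, and c-bar induction into `Q = {a | a ◁ r⁻ℕ}` covers the root. Stability
is inherited by extensions, with the same value, which gives the overlap axiom and identifies the
point image with `F`.
-/

theorem seg_prefix_seg (α : ℕ → ℕ) {k n : ℕ} (hkn : k ≤ n) : seg α k <+: seg α n := by
  rw [List.prefix_iff_eq_take]
  exact List.ext_getElem (by simp [seg, hkn]) fun i _ _ => by simp [seg]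

theorem seg_zext_append (a b : List ℕ) : seg (zext (a ++ b)) a.length = a :=
  List.ext_getElem (by simp [seg]) fun i _ hi => by
    simp [seg, zext, List.getElem?_append_left hi, List.getElem?_eq_getElem hi]

/-- The set `P` of the paper. -/
def StableAt (F : (ℕ → ℕ) → ℕ) (a : List ℕ) : Prop :=
  ∀ b : List ℕ, F (zext a) = F (zext (a ++ b))

/-- The relation `r` of the paper. -/
def stableRel (F : (ℕ → ℕ) → ℕ) (a : List ℕ) (n : ℕ) : Prop :=
  StableAt F a ∧ F (zext a) = n

def CBarInduction : Prop :=
  ∀ P : Set (List ℕ), IsCBar P → ∀ Q : Set (List ℕ), P ⊆ Q → Inductive Q → [] ∈ Q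

section StableAt

variable {F : (ℕ → ℕ) → ℕ}

theorem StableAt.apply_eq_of_prefix {a c : List ℕ} (ha : StableAt F a) (hac : a <+: c) :
    F (zext c) = F (zext a) := by
  obtain ⟨e, rfl⟩ := hac
  exact (ha e).symm

theorem StableAt.of_prefix {a c : List ℕ} (ha : StableAt F a) (hac : a <+: c) :
    StableAt F c := by
  obtain ⟨e, rfl⟩ := hac
  intro b
  rw [← ha e, List.append_assoc, ← ha (e ++ b)]

theorem exists_stableAt_seg (hF : PtwiseCts F) (α : ℕ → ℕ) :
    ∃ m, StableAt F (seg α m) ∧ F (zext (seg α m)) = F α := by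
  obtain ⟨m, hm⟩ := hF α
  have hext : ∀ b, F (zext (seg α m ++ b)) = F α := fun b =>
    hm _ (by simpa [seg] using seg_zext_append (seg α m) b)
  have hzero : F (zext (seg α m)) = F α := by simpa using hext []
  exact ⟨m, fun b => hzero.trans (hext b).symm, hzero⟩

theorem StableAt.apply_zext_seg (hF : PtwiseCts F) {α : ℕ → ℕ} {k : ℕ}
    (hk : StableAt F (seg α k)) : F (zext (seg α k)) = F α := by
  obtain ⟨m, hm, hmα⟩ := exists_stableAt_seg hF α
  rcases le_total k m with hkm | hmk
  · rw [← hmα, hk.apply_eq_of_prefix (seg_prefix_seg α hkm)]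
  · rw [← hmα, hm.apply_eq_of_prefix (seg_prefix_seg α hmk)]

theorem isCBar_stableAt (hF : PtwiseCts F) : IsCBar {a | StableAt F a} :=
  ⟨⟨fun a => F (zext a), fun _ => Iff.rfl⟩,
    fun α => (exists_stableAt_seg hF α).imp fun _ => And.left⟩

theorem stableRel_of_mem_extU {a : List ℕ} {n : ℕ}
    (ha : a ∈ extU (rInv (stableRel F) {n})) : stableRel F a n := by
  obtain ⟨b, ⟨_, rfl, hb, rfl⟩, hba⟩ := ha
  exact ⟨hb.of_prefix hba, hb.apply_eq_of_prefix hba⟩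

theorem isFTopMap_stableRel (hcBI : CBarInduction) (hF : PtwiseCts F) :
    IsFTopMap (stableRel F) := by
  refine ⟨hcBI _ (isCBar_stableAt hF) {a | Cover a _}
    (fun a ha => Cover.eta ⟨_, Set.mem_univ _, ha, rfl⟩) fun _ => Cover.digamma, ?_⟩
  rintro n m a ⟨han, ham⟩
  obtain ⟨hstable, rfl⟩ := stableRel_of_mem_extU han
  exact Cover.eta ⟨_, ⟨rfl, (stableRel_of_mem_extU ham).2⟩, hstable, rfl⟩

theorem setOf_exists_stableRel_seg_eq_singleton (hF : PtwiseCts F) (α : ℕ → ℕ) :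
    {n | ∃ k, stableRel F (seg α k) n} = {F α} := by
  ext n
  constructor
  · rintro ⟨k, hk, rfl⟩
    exact hk.apply_zext_seg hF
  · rintro rfl
    exact exists_stableAt_seg hF α

end StableAt

theorem cBI_implies_FC
    (hcBI : ∀ P : Set (List ℕ), IsCBar P →
      ∀ Q : Set (List ℕ), P ⊆ Q → Inductive Q → [] ∈ Q)
    (F : (ℕ → ℕ) → ℕ) (hF : PtwiseCts F) :
    IsCBar {a : List ℕ | ∀ b : List ℕ, F (zext a) = F (zext (a ++ b))} ∧
    IsFTopMap (fun a n =>
      (∀ b : List ℕ, F (zext a) = F (zext (a ++ b))) ∧ F (zext a) = n) ∧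
    (∀ α : ℕ → ℕ,
      {n | ∃ k, (∀ b : List ℕ, F (zext (seg α k)) = F (zext (seg α k ++ b))) ∧
        F (zext (seg α k)) = n} = {F α}) ∧
    FormallyCts F :=
  ⟨isCBar_stableAt hF, isFTopMap_stableRel hcBI hF, setOf_exists_stableRel_seg_eq_singleton hF,
    stableRel F, isFTopMap_stableRel hcBI hF, setOf_exists_stableRel_seg_eq_singleton hF⟩
end
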